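/- arXiv:2111.00166 — 6 statements merged into one kernel-verified Lean document; each statement's English description precedes it below -/
import Mathlib

section
/- Let f₁, f₂, f₃ be vectors in a real inner product space with f₁ ≠ 0 and f₂ ≠ 0, and let f̃ = f₁ + N₁ f₂ + N₂ f₃ be the null-space-modified force. Then ⟨f₁, N₁ f₂⟩ = 0 and ⟨f₁, N₂ f₃⟩ = 0, hence ⟨f₁, f̃⟩ = ‖f₁‖²; consequently ‖f₁‖ ≤ ‖f̃‖, and in particular f̃ ≠ 0, so the lower-priority terms N₁ f₂ and N₂ f₃ can never cancel the highest-priority force f₁. -/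
open scoped RealInnerProductSpace

section RealInnerProductSpace

variable {E : Type*} [NormedAddCommGroup E] [InnerProductSpace ℝ E]

theorem real_inner_sub_smul_inner_div_norm_sq_eq_zero (v x : E) :
    ⟪v, x - (⟪v, x⟫ / ‖v‖ ^ 2) • v⟫ = 0 := by
  rcases eq_or_ne v 0 with rfl | hv
  · simp
  have hv' : ‖v‖ ^ 2 ≠ 0 := by positivity
  rw [inner_sub_right, real_inner_smul_right, real_inner_self_eq_norm_sq,
    div_mul_cancel₀ _ hv', sub_self]

theorem norm_le_norm_of_real_inner_eq_norm_sq {v w : E} (h : ⟪v, w⟫ = ‖v‖ ^ 2) :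
    ‖v‖ ≤ ‖w‖ := by
  rcases (norm_nonneg v).eq_or_lt with hv | hv
  · rw [← hv]
    exact norm_nonneg w
  have : ‖v‖ * ‖v‖ ≤ ‖v‖ * ‖w‖ := by
    rw [← sq, ← h]
    exact real_inner_le_norm v w
  exact le_of_mul_le_mul_left this hv

end RealInnerProductSpace

theorem nullspace_force_no_cancellation_general
    {E : Type*} [NormedAddCommGroup E] [InnerProductSpace ℝ E]
    (f₁ f₂ f₃ : E) (hf₁ : f₁ ≠ 0)
    (N₁ N₂ : E → E)
    (hN₁ : ∀ x, N₁ x = x - (⟪f₁, x⟫ / ‖f₁‖ ^ 2) • f₁)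
    (hN₂ : ∀ x, N₂ x = N₁ (x - (⟪f₂, x⟫ / ‖f₂‖ ^ 2) • f₂))
    (ft : E) (hft : ft = f₁ + N₁ f₂ + N₂ f₃) :
    ⟪f₁, N₁ f₂⟫ = 0 ∧ ⟪f₁, N₂ f₃⟫ = 0 ∧ ⟪f₁, ft⟫ = ‖f₁‖ ^ 2 ∧
      ‖f₁‖ ≤ ‖ft‖ ∧ ft ≠ 0 := by
  have hN₁_orth (x : E) : ⟪f₁, N₁ x⟫ = 0 := by
    rw [hN₁]
    exact real_inner_sub_smul_inner_div_norm_sq_eq_zero f₁ x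
  have h₂ : ⟪f₁, N₁ f₂⟫ = 0 := hN₁_orth f₂
  have h₃ : ⟪f₁, N₂ f₃⟫ = 0 := by
    rw [hN₂]
    exact hN₁_orth _
  have hft_inner : ⟪f₁, ft⟫ = ‖f₁‖ ^ 2 := by
    rw [hft, inner_add_right, inner_add_right, h₂, h₃, real_inner_self_eq_norm_sq,
      add_zero, add_zero]
  have hle : ‖f₁‖ ≤ ‖ft‖ := norm_le_norm_of_real_inner_eq_norm_sq hft_inner
  have hft_ne : ft ≠ 0 := norm_pos_iff.mp ((norm_pos_iff.mpr hf₁).trans_le hle)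
  exact ⟨h₂, h₃, hft_inner, hle, hft_ne⟩

/-- Null-space-modified force: the lower-priority terms are orthogonal to the
highest-priority force `f₁`, hence `⟪f₁, f̃⟫ = ‖f₁‖²`, `‖f₁‖ ≤ ‖f̃‖` and `f̃ ≠ 0`. -/
theorem nullspace_force_no_cancellation
    {E : Type*} [NormedAddCommGroup E] [InnerProductSpace ℝ E]
    (f₁ f₂ f₃ : E) (hf₁ : f₁ ≠ 0) (hf₂ : f₂ ≠ 0)
    (N₁ N₂ : E → E)
    (hN₁ : ∀ x, N₁ x = x - (⟪f₁, x⟫ / ‖f₁‖ ^ 2) • f₁)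
    (hN₂ : ∀ x, N₂ x = N₁ (x - (⟪f₂, x⟫ / ‖f₂‖ ^ 2) • f₂))
    (ft : E) (hft : ft = f₁ + N₁ f₂ + N₂ f₃) :
    ⟪f₁, N₁ f₂⟫ = 0 ∧ ⟪f₁, N₂ f₃⟫ = 0 ∧ ⟪f₁, ft⟫ = ‖f₁‖ ^ 2 ∧
      ‖f₁‖ ≤ ‖ft‖ ∧ ft ≠ 0 :=
  nullspace_force_no_cancellation_general f₁ f₂ f₃ hf₁ N₁ N₂ hN₁ hN₂ ft hft
end

section
/- Let q₁, …, qₙ be points in ℝ^m, let N be a symmetric neighbor relation on {1, …, n} with i ∉ N_i, and let k_{ij} = k_{ji} > 0 and d_{ij} = d_{ji} > 0 be symmetric gains and desired inter-vehicle distances. Let d_s be a safety margin with 0 < d_s < d_{ij} for every pair with j ∈ N_i, and define the inter-vehicle potential U_α = (1/2) Σ_{i=1}^{n} Σ_{j ∈ N_i} k_{ij} · ln(cosh(‖q_i − q_j‖ − d_{ij})). If U_α ≤ c for a constant c satisfying c < k_{ij} · ln(cosh(d_{ij} − d_s)) for every pair with j ∈ N_i, then ‖q_i − q_j‖ > d_s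 for every i and every j ∈ N_i. -/
/-- Sublevel-set collision-avoidance bound for the flocking potential
`U_α = (1/2) Σᵢ Σ_{j ∈ Nᵢ} k_{ij} ln(cosh(‖qᵢ − qⱼ‖ − d_{ij}))`:
if `U_α ≤ c` with `c < k_{ij} ln(cosh(d_{ij} − d_s))` for all neighbor pairs,
then all inter-vehicle distances stay above the safety margin `d_s`. -/
theorem flocking_collision_avoidance
    {m n : ℕ} (q : Fin n → EuclideanSpace ℝ (Fin m))
    (Nb : Fin n → Finset (Fin n))
    (hsym : ∀ i j, j ∈ Nb i ↔ i ∈ Nb j)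
    (hirr : ∀ i, i ∉ Nb i)
    (k d : Fin n → Fin n → ℝ)
    (hksym : ∀ i j, k i j = k j i)
    (hkpos : ∀ i j, j ∈ Nb i → 0 < k i j)
    (hdsym : ∀ i j, d i j = d j i)
    (hdpos : ∀ i j, j ∈ Nb i → 0 < d i j)
    (ds : ℝ) (hds : 0 < ds)
    (hdsd : ∀ i j, j ∈ Nb i → ds < d i j)
    (c : ℝ)
    (hU : (1 / 2 : ℝ) * ∑ i, ∑ j ∈ Nb i,
        k i j * Real.log (Real.cosh (‖q i - q j‖ - d i j)) ≤ c)
    (hc : ∀ i j, j ∈ Nb i → c < k i j * Real.log (Real.cosh (d i j - ds))) :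
    ∀ i, ∀ j ∈ Nb i, ds < ‖q i - q j‖ := by
  intro i j hj
  set f : Fin n → Fin n → ℝ :=
    fun a b => k a b * Real.log (Real.cosh (‖q a - q b‖ - d a b)) with hf
  have hnonneg : ∀ a b, b ∈ Nb a → 0 ≤ f a b := by
    intro a b hb
    exact mul_nonneg (hkpos a b hb).le
      (Real.log_nonneg (Real.one_le_cosh _))
  have hterm_le : f i j ≤ c := by
    have hgnn : ∀ a ∈ (Finset.univ : Finset (Fin n)), 0 ≤ ∑ b ∈ Nb a, f a b := by
      intro a _
      exact Finset.sum_nonneg fun b hb => hnonneg a b hb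
    have h1 : f i j ≤ ∑ b ∈ Nb i, f i b :=
      Finset.single_le_sum (fun b hb => hnonneg i b hb) hj
    have h2 : f j i ≤ ∑ b ∈ Nb j, f j b :=
      Finset.single_le_sum (fun b hb => hnonneg j b hb) ((hsym i j).mp hj)
    have hij : i ≠ j := fun h => hirr i (h ▸ hj)
    have hsum : (∑ b ∈ Nb i, f i b) + (∑ b ∈ Nb j, f j b)
        ≤ ∑ a, ∑ b ∈ Nb a, f a b := by
      have := Finset.add_sum_erase Finset.univ (fun a => ∑ b ∈ Nb a, f a b)
        (Finset.mem_univ i)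
      rw [← this]
      have hjmem : j ∈ Finset.univ.erase i := Finset.mem_erase.mpr ⟨hij.symm, Finset.mem_univ j⟩
      have : (∑ b ∈ Nb j, f j b) ≤ ∑ a ∈ Finset.univ.erase i, ∑ b ∈ Nb a, f a b :=
        Finset.single_le_sum (fun a ha => hgnn a (Finset.mem_univ a)) hjmem
      linarith
    have hfeq : f j i = f i j := by
      simp only [hf, hksym j i, hdsym j i, norm_sub_rev]
    have h2' : 2 * f i j ≤ ∑ a, ∑ b ∈ Nb a, f a b := by
      rw [← hfeq] at h1 ⊢
      -- careful: rewrite only where needed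
      nlinarith [h1, h2, hsum, hfeq]
    linarith [hU]
  have hkp := hkpos i j hj
  have hlog : Real.log (Real.cosh (‖q i - q j‖ - d i j))
      < Real.log (Real.cosh (d i j - ds)) := by
    have := lt_of_le_of_lt hterm_le (hc i j hj)
    exact lt_of_mul_lt_mul_left (by simpa [hf, mul_comm] using this) hkp.le
  by_contra h
  push_neg at h
  have hd := hdsd i j hj
  have hcosh : Real.cosh (d i j - ds) ≤ Real.cosh (‖q i - q j‖ - d i j) := by
    apply Real.cosh_le_cosh.mpr
    rw [abs_of_pos (by linarith), abs_sub_comm,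
      abs_of_pos (by linarith : (0:ℝ) < d i j - ‖q i - q j‖)]
    linarith
  have := Real.log_le_log (Real.cosh_pos _) hcosh
  linarith
end

section
/- Let μ be a finite nonzero Borel measure on E = EuclideanSpace ℝ (Fin d) with finite second moment, i.e. ∫ ‖q‖² dμ(q) < ∞. Let M = μ(E) > 0 and let C = M⁻¹ · ∫ q dμ(q) be the centroid of μ. Then the function J(p) = ∫ ‖q − p‖² dμ(q) is differentiable at every p ∈ E with gradient ∇J(p) = 2M·(p − C). In particular ∇J(p) = 0 if and only if p = C, i.e. the centroid is the unique critical point of the polar moment of inertia. -/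
/-!
Expanding the square, `J(p) = ∫ ‖q‖² dμ - 2 ⟪∫ q dμ, p⟫ + M ‖p‖²` is a quadratic polynomial in `p`
with gradient `2 (M p - ∫ q dμ) = 2M (p - C)`; since `M > 0`, this vanishes exactly at `p = C`.
-/

open MeasureTheory RealInnerProductSpace

variable {E : Type*} [NormedAddCommGroup E] [MeasurableSpace E] [BorelSpace E] [SecondCountableTopology E]
  {μ : Measure E} [IsFiniteMeasure μ]

theorem integrable_id_of_integrable_norm_sq (h2 : Integrable (fun q : E => ‖q‖ ^ 2) μ) :
    Integrable (fun q : E => q) μ :=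
  ((memLp_two_iff_integrable_sq_norm aestronglyMeasurable_id).2 h2).integrable one_le_two

variable [InnerProductSpace ℝ E] [CompleteSpace E]

theorem integral_norm_sub_sq (h2 : Integrable (fun q : E => ‖q‖ ^ 2) μ) (p : E) :
    ∫ q, ‖q - p‖ ^ 2 ∂μ = ∫ q, ‖q‖ ^ 2 ∂μ - 2 * ⟪∫ q, q ∂μ, p⟫ + μ.real Set.univ * ‖p‖ ^ 2 := by
  have hq := integrable_id_of_integrable_norm_sq h2
  have h_inner_int : Integrable (fun q : E => 2 * ⟪q, p⟫) μ := (hq.inner_const p).const_mul 2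
  have h_inner : ∫ q, ⟪q, p⟫ ∂μ = ⟪∫ q, q ∂μ, p⟫ := by
    simpa only [real_inner_comm p] using integral_inner hq p
  have h_sub : Integrable (fun q : E => ‖q‖ ^ 2 - 2 * ⟪q, p⟫) μ := h2.sub h_inner_int
  simp only [norm_sub_sq_real]
  rw [integral_add h_sub (integrable_const _), integral_sub h2 h_inner_int,
    integral_const_mul, h_inner, integral_const, smul_eq_mul]

theorem hasGradientAt_integral_norm_sub_sq (h2 : Integrable (fun q : E => ‖q‖ ^ 2) μ) (p : E) :
    HasGradientAt (fun p => ∫ q, ‖q - p‖ ^ 2 ∂μ) ((2 : ℝ) • (μ.real Set.univ • p - ∫ q, q ∂μ)) p := by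
  simp only [integral_norm_sub_sq h2, hasGradientAt_iff_hasFDerivAt]
  have h_inner : HasFDerivAt (fun p : E => ⟪∫ q, q ∂μ, p⟫) (innerSL ℝ (∫ q, q ∂μ)) p :=
    (innerSL ℝ _).hasFDerivAt
  have h_norm : HasFDerivAt (fun p : E => ‖p‖ ^ 2) (2 • innerSL ℝ p) p := by
    simpa using (hasFDerivAt_id p).norm_sq
  refine (((hasFDerivAt_const _ p).sub (h_inner.const_mul 2)).add
    (h_norm.const_mul _)).congr_fderiv ?_
  ext y
  simp only [add_apply, sub_apply, zero_apply, smul_apply,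
    coe_innerSL_apply, InnerProductSpace.toDual_apply_apply, smul_eq_mul, nsmul_eq_mul,
    inner_sub_left, real_inner_smul_left]
  ring

open RealInnerProductSpace in
/-- For a finite nonzero measure `μ` on Euclidean space with finite second
moment, the polar moment of inertia `J(p) = ∫ ‖q − p‖² dμ` has gradient `2M(p − C)` at
every `p`, where `M = μ(E)` and `C` is the centroid; its unique critical point is `C`. -/
theorem polar_moment_gradient
    {d : ℕ} (μ : Measure (EuclideanSpace ℝ (Fin d)))
    [IsFiniteMeasure μ] (hμ : μ ≠ 0)
    (h2 : Integrable (fun q => ‖q‖ ^ 2) μ)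
    (M : ℝ) (hM : M = (μ Set.univ).toReal)
    (C : EuclideanSpace ℝ (Fin d)) (hC : C = M⁻¹ • ∫ q, q ∂μ)
    (p : EuclideanSpace ℝ (Fin d)) :
    HasGradientAt (fun p : EuclideanSpace ℝ (Fin d) => ∫ q, ‖q - p‖ ^ 2 ∂μ)
      ((2 * M) • (p - C)) p ∧ ((2 * M) • (p - C) = 0 ↔ p = C) := by
  have hM_pos : 0 < M := hM ▸ ENNReal.toReal_pos (by simpa using hμ) (measure_ne_top μ _)
  have h_integral : ∫ q, q ∂μ = M • C := by
    rw [hC, smul_smul, mul_inv_cancel₀ hM_pos.ne', one_smul]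
  have h_grad : (2 * M) • (p - C) = (2 : ℝ) • (μ.real Set.univ • p - ∫ q, q ∂μ) := by
    rw [h_integral, show μ.real Set.univ = M from hM.symm, ← smul_sub, smul_smul]
  refine ⟨h_grad ▸ hasGradientAt_integral_norm_sub_sq h2 p, ?_⟩
  rw [smul_eq_zero, sub_eq_zero]
  simp [hM_pos.ne']
end

section
/- Let a > 0 and b ≥ 0 be constants and let x : ℝ → E be a differentiable function into a real inner product space E such that ⟨x(t), x′(t)⟩ ≤ ‖x(t)‖·(b − a‖x(t)‖) for all t ≥ 0. Then limsup_{t→∞} ‖x(t)‖ ≤ b/a; that is, x is uniformly ultimately bounded with respect to the closed ball of radius b/a. -/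
open scoped RealInnerProductSpace
open Filter

/-!
The squared norm `V = ‖x‖²` is a Lyapunov function: `V' = 2⟪x, x'⟫`, and on the region
`‖x‖ ≥ R := b / a + ε` the hypothesis gives `V' ≤ -2aεR < 0`. Decreasing at a uniform rate, `V`
must enter the sublevel set `{V ≤ R²}` in finite time, and it can never leave it since `V` is
strictly decreasing on its boundary.
-/

section Lyapunov

variable {g g' : ℝ → ℝ} {t₀ c δ : ℝ}

theorem forall_le_of_le_of_deriv_neg_of_eq (hg : ∀ t ≥ t₀, HasDerivAt g (g' t) t)
    (h₀ : g t₀ ≤ c) (hneg : ∀ t ≥ t₀, g t = c → g' t < 0) : ∀ t ≥ t₀, g t ≤ c := by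
  intro t ht
  exact image_le_of_deriv_right_lt_deriv_boundary (B := fun _ => c) (B' := fun _ => 0)
    (fun s hs => (hg s hs.1).continuousAt.continuousWithinAt)
    (fun s hs => (hg s hs.1).hasDerivWithinAt) h₀ (fun _ => hasDerivAt_const _ c)
    (fun s hs => hneg s hs.1) ⟨ht, le_rfl⟩

theorem exists_le_of_deriv_le_neg (hδ : 0 < δ) (hg : ∀ t ≥ t₀, HasDerivAt g (g' t) t)
    (hdec : ∀ t ≥ t₀, c ≤ g t → g' t ≤ -δ) : ∃ t ≥ t₀, g t ≤ c := by
  by_contra! habove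
  -- Above `c` the slope is at most `-δ`, so `g` would reach the level `c` by time `T`.
  set T := t₀ + (g t₀ - c) / δ
  have hT : t₀ ≤ T :=
    le_add_of_nonneg_right (div_nonneg (sub_nonneg.2 (habove t₀ le_rfl).le) hδ.le)
  have hlin : g T ≤ g t₀ - δ * (T - t₀) :=
    image_le_of_deriv_right_le_deriv_boundary (B := fun t => g t₀ - δ * (t - t₀))
      (B' := fun _ => -δ) (fun s hs => (hg s hs.1).continuousAt.continuousWithinAt)
      (fun s hs => (hg s hs.1).hasDerivWithinAt) (by simp) (by fun_prop)
      (fun s _ => by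
        simpa using ((((hasDerivAt_id s).sub_const t₀).const_mul δ).const_sub _).hasDerivWithinAt)
      (fun s hs => hdec s hs.1 (habove s hs.1).le) ⟨hT, le_rfl⟩
  have hlevel : g t₀ - δ * (T - t₀) = c := by
    rw [add_sub_cancel_left, mul_div_cancel₀ _ hδ.ne', sub_sub_cancel]
  exact (habove T hT).not_ge (hlin.trans hlevel.le)

theorem eventually_le_of_deriv_le_neg (hδ : 0 < δ) (hg : ∀ t ≥ t₀, HasDerivAt g (g' t) t)
    (hdec : ∀ t ≥ t₀, c ≤ g t → g' t ≤ -δ) : ∀ᶠ t in atTop, g t ≤ c := by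
  obtain ⟨T, hT, hgT⟩ := exists_le_of_deriv_le_neg hδ hg hdec
  refine eventually_atTop.2 ⟨T, forall_le_of_le_of_deriv_neg_of_eq
    (fun t ht => hg t (hT.trans ht)) hgT fun t ht hgt => ?_⟩
  exact (hdec t (hT.trans ht) hgt.ge).trans_lt (neg_neg_of_pos hδ)

end Lyapunov

theorem mul_sub_mul_le_of_div_add_le {a b ε u : ℝ} (ha : 0 < a) (hε : 0 ≤ ε) (hu : 0 ≤ u)
    (h : b / a + ε ≤ u) : u * (b - a * u) ≤ -(a * ε * (b / a + ε)) := by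
  have hgap : b - a * u ≤ -(a * ε) := by
    have := mul_le_mul_of_nonneg_left h ha.le
    rw [mul_add, mul_div_cancel₀ _ ha.ne'] at this
    linarith
  nlinarith [mul_le_mul_of_nonneg_left hgap hu, mul_nonneg ha.le hε]

/-- Uniform ultimate boundedness: if `⟨x(t), x′(t)⟩ ≤ ‖x(t)‖(b − a‖x(t)‖)`
for all `t ≥ 0` with `a > 0`, `b ≥ 0`, then `limsup_{t→∞} ‖x(t)‖ ≤ b/a`. -/
theorem uniform_ultimate_boundedness
    {E : Type*} [NormedAddCommGroup E] [InnerProductSpace ℝ E]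
    (a b : ℝ) (ha : 0 < a) (hb : 0 ≤ b)
    (x x' : ℝ → E) (hx : ∀ t, HasDerivAt x (x' t) t)
    (h : ∀ t, 0 ≤ t → ⟪x t, x' t⟫ ≤ ‖x t‖ * (b - a * ‖x t‖)) :
    limsup (fun t => ‖x t‖) atTop ≤ b / a ∧
      ∀ ε > 0, ∀ᶠ t in atTop, ‖x t‖ ≤ b / a + ε := by
  have hbound : ∀ ε > 0, ∀ᶠ t in atTop, ‖x t‖ ≤ b / a + ε := by
    intro ε hε
    have hR : 0 < b / a + ε := by positivity
    have hsq : ∀ᶠ t in atTop, ‖x t‖ ^ 2 ≤ (b / a + ε) ^ 2 := by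
      refine eventually_le_of_deriv_le_neg (t₀ := 0) (δ := 2 * (a * ε * (b / a + ε)))
        (by positivity) (fun t _ => (hx t).norm_sq) fun t ht hRt => ?_
      have hRx := (pow_le_pow_iff_left₀ hR.le (norm_nonneg _) two_ne_zero).1 hRt
      linarith [h t ht, mul_sub_mul_le_of_div_add_le ha hε.le (norm_nonneg _) hRx]
    exact hsq.mono fun t ht => (pow_le_pow_iff_left₀ (norm_nonneg _) hR.le two_ne_zero).1 ht
  refine ⟨le_of_forall_pos_le_add fun ε hε => ?_, hbound⟩
  exact limsup_le_of_le (isCoboundedUnder_le_of_eventually_le atTop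
    (Eventually.of_forall fun t => norm_nonneg (x t))) (hbound ε hε)
end

section
/- Let k > 0 and γ > 0 and let x : ℝ → ℝ be differentiable with x′(t) = −k·tanh(γ·x(t)) for all t ≥ 0. Then t ↦ |x(t)| is nonincreasing on [0, ∞) and x(t) → 0 as t → ∞. -/
/-!
`V = x²` is a Lyapunov function: `V' = -2k · x tanh(γx) ≤ 0`, since `tanh` is increasing and odd,
so `|x|` decreases. If `|x|` stayed above some `ε > 0`, then `x tanh(γx) ≥ ε tanh(γε)` and `V`
would decrease at a uniform positive rate, eventually becoming negative.
-/

open Real Set Filter Topology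

namespace Real

theorem tanh_strictMono : StrictMono tanh := by
  intro a b hab
  have hsinh : 0 < sinh (b - a) := sinh_pos_iff.2 (sub_pos.2 hab)
  rw [sinh_sub] at hsinh
  rw [tanh_eq_sinh_div_cosh, tanh_eq_sinh_div_cosh, div_lt_div_iff₀ (cosh_pos a) (cosh_pos b)]
  linarith

theorem tanh_nonneg {a : ℝ} (ha : 0 ≤ a) : 0 ≤ tanh a :=
  tanh_zero ▸ tanh_strictMono.monotone ha

theorem tanh_pos {a : ℝ} (ha : 0 < a) : 0 < tanh a :=
  tanh_zero ▸ tanh_strictMono ha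

theorem mul_tanh_mul_eq_abs_mul_tanh_mul_abs (γ a : ℝ) : a * tanh (γ * a) = |a| * tanh (γ * |a|) := by
  rcases abs_choice a with h | h <;> rw [h]
  rw [mul_neg, tanh_neg, neg_mul_neg]

theorem mul_tanh_mul_le_of_le_abs {γ L a : ℝ} (hγ : 0 ≤ γ) (hL : 0 ≤ L) (hLa : L ≤ |a|) :
    L * tanh (γ * L) ≤ a * tanh (γ * a) := by
  rw [mul_tanh_mul_eq_abs_mul_tanh_mul_abs γ a]
  exact mul_le_mul hLa (tanh_strictMono.monotone (mul_le_mul_of_nonneg_left hLa hγ))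
    (tanh_nonneg (mul_nonneg hγ hL)) (hL.trans hLa)

end Real

theorem sub_le_mul_sub_of_hasDerivAt_le {D : Set ℝ} (hD : Convex ℝ D) {f f' : ℝ → ℝ} {C : ℝ}
    (hf : ∀ t ∈ D, HasDerivAt f (f' t) t) (hC : ∀ t ∈ D, f' t ≤ C)
    {s t : ℝ} (hs : s ∈ D) (ht : t ∈ D) (hst : s ≤ t) : f t - f s ≤ C * (t - s) :=
  hD.image_sub_le_mul_sub_of_deriv_le
    (fun u hu => (hf u hu).continuousAt.continuousWithinAt)
    (fun u hu => (hf u (interior_subset hu)).differentiableAt.differentiableWithinAt)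
    (fun u hu => (hf u (interior_subset hu)).deriv ▸ hC u (interior_subset hu)) s hs t ht hst

theorem tendsto_zero_of_antitoneOn_abs {f : ℝ → ℝ} {a : ℝ}
    (hf : AntitoneOn (fun t => |f t|) (Ici a)) (hsmall : ∀ ε > 0, ∃ T ≥ a, |f T| < ε) :
    Tendsto f atTop (𝓝 0) := by
  rw [Metric.tendsto_atTop]
  intro ε hε
  obtain ⟨T, hTa, hT⟩ := hsmall ε hε
  refine ⟨T, fun t ht => ?_⟩
  rw [Real.dist_eq, sub_zero]
  exact (hf (mem_Ici.2 hTa) (mem_Ici.2 (hTa.trans ht)) ht).trans_lt hT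

/-- For the smooth sliding-mode reaching law `x′ = −k tanh(γ x)` (for `t ≥ 0`,
`k, γ > 0`), `|x|` is nonincreasing on `[0, ∞)` and `x(t) → 0` as `t → ∞`. -/
theorem sliding_mode_reaching_law_convergence
    (k γ : ℝ) (hk : 0 < k) (hγ : 0 < γ)
    (x : ℝ → ℝ)
    (hx : ∀ t, 0 ≤ t → HasDerivAt x (-(k * Real.tanh (γ * x t))) t) :
    AntitoneOn (fun t => |x t|) (Set.Ici 0) ∧
      Filter.Tendsto x Filter.atTop (nhds 0) := by
  have hV : ∀ t ∈ Ici (0 : ℝ), HasDerivAt (fun s => x s ^ 2)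
      (-(2 * k) * (x t * tanh (γ * x t))) t := fun t ht => by
    refine ((hx t ht).pow 2).congr_deriv ?_
    push_cast
    ring
  have hV' {L : ℝ} (hL : 0 ≤ L) (hLx : ∀ t ∈ Ici (0 : ℝ), L ≤ |x t|) (t : ℝ) (ht : t ∈ Ici 0) :
      -(2 * k) * (x t * tanh (γ * x t)) ≤ -(2 * k) * (L * tanh (γ * L)) :=
    mul_le_mul_of_nonpos_left (mul_tanh_mul_le_of_le_abs hγ.le hL (hLx t ht)) (by linarith)
  have hanti : AntitoneOn (fun t => |x t|) (Ici 0) := fun s hs t ht hst => by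
    have := sub_le_mul_sub_of_hasDerivAt_le (convex_Ici 0) hV
      (hV' le_rfl fun t _ => abs_nonneg (x t)) hs ht hst
    exact sq_le_sq.1 (by simpa using this)
  refine ⟨hanti, tendsto_zero_of_antitoneOn_abs hanti fun ε hε => ?_⟩
  by_contra! hlarge
  set c := 2 * k * (ε * tanh (γ * ε))
  have hc : 0 < c := by have := tanh_pos (mul_pos hγ hε); positivity
  set T := x 0 ^ 2 / c + 1
  have hT : 0 ≤ T := by positivity
  have hdecay := sub_le_mul_sub_of_hasDerivAt_le (convex_Ici 0) hV
    (hV' hε.le hlarge) self_mem_Ici hT hT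
  have hcT : c * T = x 0 ^ 2 + c := by simp only [T]; field_simp
  nlinarith [sq_nonneg (x T)]
end

section
/- Let n ∈ ℝ³, let V ∈ ℝ be a constant speed, let λ : ℝ → ℝ, and let s, a : ℝ → ℝ³ be differentiable functions satisfying, for all t, s′(t) = V·a(t) and a′(t) = u(t) where u(t) = λ(t)·(a(t) × n). If at some time τ the heading satisfies ⟨a(τ), n⟩ = 0, then for all t: (i) ⟨a(t), u(t)⟩ = 0, so the control is feasible for the nonholonomic model; (ii) ⟨a(t), n⟩ = 0 and ‖a(t)‖ = ‖a(τ)‖, so the heading remains a vector of constant length lying in the plane with normal n; and (iii) ⟨s(t) − s(τ), n⟩ = 0, i.e. the trajectory remains in the plane of avoidance through s(τ) with normal n. -/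
open scoped RealInnerProductSpace

/-- The cross product on `ℝ³` (as a Euclidean space). -/
noncomputable def cross3 (x y : EuclideanSpace ℝ (Fin 3)) : EuclideanSpace ℝ (Fin 3) :=
  WithLp.toLp 2 ![x 1 * y 2 - x 2 * y 1, x 2 * y 0 - x 0 * y 2, x 0 * y 1 - x 1 * y 0]

lemma inner_self_cross3 (x y : EuclideanSpace ℝ (Fin 3)) : ⟪x, cross3 x y⟫ = 0 := by
  simp only [cross3, PiLp.inner_apply, RCLike.inner_apply, conj_trivial, Fin.sum_univ_three]
  change (x 1 * y 2 - x 2 * y 1) * x 0 + (x 2 * y 0 - x 0 * y 2) * x 1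
      + (x 0 * y 1 - x 1 * y 0) * x 2 = 0
  ring

lemma inner_cross3_self (x y : EuclideanSpace ℝ (Fin 3)) : ⟪cross3 x y, y⟫ = 0 := by
  simp only [cross3, PiLp.inner_apply, RCLike.inner_apply, conj_trivial, Fin.sum_univ_three]
  change y 0 * (x 1 * y 2 - x 2 * y 1) + y 1 * (x 2 * y 0 - x 0 * y 2)
      + y 2 * (x 0 * y 1 - x 1 * y 0) = 0
  ring

section ConservedQuantities

variable {E : Type*} [NormedAddCommGroup E] [InnerProductSpace ℝ E]
  {f f' : ℝ → E} (hf : ∀ t, HasDerivAt f (f' t) t)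
include hf

lemma inner_eq_of_hasDerivAt_of_inner_deriv_eq_zero {n : E} (h : ∀ t, ⟪f' t, n⟫ = 0)
    (t t₀ : ℝ) : ⟪f t, n⟫ = ⟪f t₀, n⟫ := by
  have hderiv : ∀ t, HasDerivAt (fun t => ⟪f t, n⟫) 0 t := fun t => by
    simpa [h t] using (hf t).inner ℝ (hasDerivAt_const t n)
  exact is_const_of_deriv_eq_zero (fun t => (hderiv t).differentiableAt)
    (fun t => (hderiv t).deriv) t t₀

lemma norm_eq_of_hasDerivAt_of_inner_deriv_eq_zero (h : ∀ t, ⟪f t, f' t⟫ = 0)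
    (t t₀ : ℝ) : ‖f t‖ = ‖f t₀‖ := by
  have hderiv : ∀ t, HasDerivAt (‖f ·‖ ^ 2) 0 t := fun t => by
    simpa [h t] using (hf t).norm_sq
  have hsq : ‖f t‖ ^ 2 = ‖f t₀‖ ^ 2 :=
    is_const_of_deriv_eq_zero (fun t => (hderiv t).differentiableAt)
      (fun t => (hderiv t).deriv) t t₀
  exact (sq_eq_sq₀ (norm_nonneg _) (norm_nonneg _)).mp hsq

end ConservedQuantities

/-- For the 3D nonholonomic model `s′ = V a`, `a′ = u` with the avoidance
law `u = λ (a × n)`: the control is feasible (`⟨a, u⟩ = 0`), the heading stays in the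
plane with normal `n` with constant length, and the trajectory stays in the plane of
avoidance through `s(τ)`. -/
theorem plane_of_avoidance_invariance
    (n : EuclideanSpace ℝ (Fin 3)) (V : ℝ) (lam : ℝ → ℝ)
    (s a u : ℝ → EuclideanSpace ℝ (Fin 3))
    (hs : ∀ t, HasDerivAt s (V • a t) t)
    (ha : ∀ t, HasDerivAt a (u t) t)
    (hu : ∀ t, u t = lam t • cross3 (a t) n)
    (τ : ℝ) (hτ : ⟪a τ, n⟫ = 0) :
    ∀ t, ⟪a t, u t⟫ = 0 ∧ (⟪a t, n⟫ = 0 ∧ ‖a t‖ = ‖a τ‖) ∧ ⟪s t - s τ, n⟫ = 0 := by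
  have hau : ∀ t, ⟪a t, u t⟫ = 0 := fun t => by
    rw [hu t, real_inner_smul_right, inner_self_cross3, mul_zero]
  have hun : ∀ t, ⟪u t, n⟫ = 0 := fun t => by
    rw [hu t, real_inner_smul_left, inner_cross3_self, mul_zero]
  have han : ∀ t, ⟪a t, n⟫ = 0 := fun t =>
    (inner_eq_of_hasDerivAt_of_inner_deriv_eq_zero ha hun t τ).trans hτ
  have hsn : ∀ t, ⟪V • a t, n⟫ = 0 := fun t => by
    rw [real_inner_smul_left, han t, mul_zero]
  intro t
  refine ⟨hau t, ⟨han t, norm_eq_of_hasDerivAt_of_inner_deriv_eq_zero ha hau t τ⟩, ?_⟩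
  rw [inner_sub_left, sub_eq_zero]
  exact inner_eq_of_hasDerivAt_of_inner_deriv_eq_zero hs hsn t τ
end
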